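/- For every nondeterministic Büchi automaton A over a finite alphabet Σ and every k ≥ 1, the ∃-window jumping language J_∃⊞(A) is k⊞-invariant: if w ∈ J_∃⊞(A) and w' ≃_k w, then w' ∈ J_∃⊞(A). -/

import Mathlib

open scoped Classical

/-- A (nondeterministic) Büchi automaton over alphabet `A`, with a finite state set. -/
structure BuchiAutomaton (A : Type) : Type 1 where
  Q : Type
  fin : Fintype Q
  step : Q → A → Set Q
  init : Set Q
  accept : Set Q

attribute [instance] BuchiAutomaton.fin

/-- A run of the automaton on an infinite word. -/
def BuchiAutomaton.IsRun {A : Type} (M : BuchiAutomaton A) (w : ℕ → A) (ρ : ℕ → M.Q) : Prop :=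
  ρ 0 ∈ M.init ∧ ∀ i, ρ (i + 1) ∈ M.step (ρ i) (w i)

/-- The language of a Büchi automaton: words admitting a run visiting the accepting set
infinitely often. -/
def BuchiAutomaton.lang {A : Type} (M : BuchiAutomaton A) : Set (ℕ → A) :=
  {w | ∃ ρ, M.IsRun w ρ ∧ ∀ n, ∃ m, n ≤ m ∧ ρ m ∈ M.accept}

/-- A Büchi automaton is deterministic if it has a unique initial state and
every transition set is a singleton. -/
def BuchiAutomaton.Deterministic {A : Type} (M : BuchiAutomaton A) : Prop :=
  (∃ q, M.init = {q}) ∧ ∀ q a, ∃ p, M.step q a = {p}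

/-- Parikh image of an infinite word: number of occurrences of each letter (`⊤` if infinite). -/
noncomputable def parikhInf {A : Type} (w : ℕ → A) : A → ℕ∞ :=
  fun a => {i : ℕ | w i = a}.encard

/-- The jumping language of a Büchi automaton. -/
def JumpLang {A : Type} (M : BuchiAutomaton A) : Set (ℕ → A) :=
  {w | ∃ w', parikhInf w' = parikhInf w ∧ w' ∈ M.lang}

/-- Number of occurrences of letter `a` in the `i`-th window of size `k` of `w`. -/
noncomputable def winCount {A : Type} (w : ℕ → A) (k i : ℕ) (a : A) : ℕ :=
  {j : ℕ | k * i ≤ j ∧ j < k * i + k ∧ w j = a}.ncard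

/-- `w` and `w'` are `k`-window permutations of each other. -/
def KWinPerm {A : Type} (k : ℕ) (w w' : ℕ → A) : Prop :=
  ∀ i a, winCount w k i a = winCount w' k i a

/-- The `k`-window jumping language of a Büchi automaton. -/
def KWinLang {A : Type} (M : BuchiAutomaton A) (k : ℕ) : Set (ℕ → A) :=
  {w | ∃ w', KWinPerm k w' w ∧ w' ∈ M.lang}

/-- The `∃`-window jumping language of a Büchi automaton. -/
def EWinLang {A : Type} (M : BuchiAutomaton A) : Set (ℕ → A) :=
  {w | ∃ k, 1 ≤ k ∧ ∃ w', KWinPerm k w' w ∧ w' ∈ M.lang}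

/-- Linear subsets of `ℕ^A`. -/
def IsLinearSetN {A : Type} (R : Set (A → ℕ)) : Prop :=
  ∃ (b : A → ℕ) (P : Finset (A → ℕ)),
    R = {v | ∃ c : (A → ℕ) → ℕ, v = b + ∑ p ∈ P, c p • p}

/-- Semilinear sets: finite unions of linear sets. -/
def IsSemilinearSetN {A : Type} (R : Set (A → ℕ)) : Prop :=
  ∃ (n : ℕ) (f : Fin n → Set (A → ℕ)), (∀ i, IsLinearSetN (f i)) ∧ R = ⋃ i, f i

/-- A mask: a vector over `{0,∞}` with at least one `∞` coordinate. -/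
def IsMask {A : Type} (m : A → ℕ∞) : Prop :=
  (∀ a, m a = 0 ∨ m a = ⊤) ∧ ∃ a, m a = ⊤

/-- Adding a mask to a vector of naturals. -/
def maskAdd {A : Type} (x : A → ℕ) (m : A → ℕ∞) : A → ℕ∞ :=
  fun a => (x a : ℕ∞) + m a

/-- Adding a mask to a set of vectors, `R + m`. -/
def maskAddSet {A : Type} (R : Set (A → ℕ)) (m : A → ℕ∞) : Set (A → ℕ∞) :=
  (fun x => maskAdd x m) '' R

/-- `𝕄^A`: extended-natural vectors with at least one `∞` coordinate. -/
def MVecs (A : Type) : Set (A → ℕ∞) := {v | ∃ a, v a = ⊤}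

/-- Masked semilinear set: a union `⋃_m (S_m + m)` over all masks `m`, with each `S_m`
semilinear. -/
def IsMaskedSemilinear {A : Type} (S : Set (A → ℕ∞)) : Prop :=
  ∃ F : (A → ℕ∞) → Set (A → ℕ),
    (∀ m, IsMask m → IsSemilinearSetN (F m)) ∧
    S = ⋃ m ∈ {m' : A → ℕ∞ | IsMask m'}, maskAddSet (F m) m

/-- `R` is `m`-oblivious: membership only depends on the `m`-equivalence class. -/
def MOblivious {A : Type} (m : A → ℕ∞) (R : Set (A → ℕ)) : Prop :=
  ∀ u v : A → ℕ, maskAdd u m = maskAdd v m → (u ∈ R ↔ v ∈ R)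

/-- `E_m`: unit vectors at the `∞` coordinates of the mask `m`. -/
noncomputable def maskUnits {A : Type} [Fintype A] [DecidableEq A] (m : A → ℕ∞) :
    Finset (A → ℕ) :=
  (Finset.univ.filter (fun a => m a = ⊤)).image (fun a => Pi.single a 1)

/-- `R` is in canonical `m`-oblivious form. -/
def CanonicalOblivious {A : Type} [Fintype A] [DecidableEq A] (m : A → ℕ∞)
    (R : Set (A → ℕ)) : Prop :=
  ∃ (n : ℕ) (b : Fin n → (A → ℕ)) (P : Fin n → Finset (A → ℕ)),
    (∀ i a, m a = ⊤ → b i a = 0) ∧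
    (∀ i p, p ∈ P i → ∀ a, m a = ⊤ → p a = 0) ∧
    R = ⋃ i, {v | ∃ c : (A → ℕ) → ℕ, v = b i + ∑ p ∈ (P i ∪ maskUnits m), c p • p}

/-! A window of length `k * n` is the disjoint union of `n` consecutive windows of length `k`, so a
`k`-window permutation is also a `k * n`-window permutation. Given `v ≃_{k₀} w` with `v ∈ L(M)` and
`w' ≃_k w`, both relations therefore hold at the common window length `k₀ * k`, and chaining them
gives `v ≃_{k₀ * k} w'`. -/

theorem Finset.card_filter_Ico_add_mul (p : ℕ → Prop) [DecidablePred p] (s k n : ℕ) :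
    ((Finset.Ico s (s + k * n)).filter p).card
      = ∑ t ∈ Finset.range n, ((Finset.Ico (s + k * t) (s + k * t + k)).filter p).card := by
  induction n with
  | zero => simp
  | succ n ih =>
    rw [Finset.sum_range_succ, ← ih, mul_add_one, ← add_assoc,
      ← Finset.Ico_union_Ico_eq_Ico (Nat.le_add_right s (k * n)) (Nat.le_add_right _ k),
      Finset.filter_union, Finset.card_union_of_disjoint
        (Finset.disjoint_filter_filter (Finset.Ico_disjoint_Ico_consecutive _ _ _))]

theorem winCount_eq_card {A : Type} (w : ℕ → A) (k i : ℕ) (a : A) :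
    winCount w k i a = ((Finset.Ico (k * i) (k * i + k)).filter (fun j => w j = a)).card := by
  rw [winCount, ← Set.ncard_coe_finset]
  congr 1
  ext j
  simp [and_assoc]

theorem winCount_mul {A : Type} (w : ℕ → A) (k n i : ℕ) (a : A) :
    winCount w (k * n) i a = ∑ t ∈ Finset.range n, winCount w k (n * i + t) a := by
  simp only [winCount_eq_card, mul_add, ← mul_assoc]
  exact Finset.card_filter_Ico_add_mul (fun j => w j = a) (k * n * i) k n

namespace KWinPerm

variable {A : Type} {k : ℕ} {u v w : ℕ → A}

theorem symm (h : KWinPerm k u v) : KWinPerm k v u :=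
  fun i a => (h i a).symm

theorem trans (huv : KWinPerm k u v) (hvw : KWinPerm k v w) : KWinPerm k u w :=
  fun i a => (huv i a).trans (hvw i a)

theorem mul_right (h : KWinPerm k u v) (n : ℕ) : KWinPerm (k * n) u v := by
  intro i a
  simp only [winCount_mul, h _ a]

end KWinPerm

theorem eWinLang_kWin_invariant_general (A : Type) (M : BuchiAutomaton A)
    (k : ℕ) (hk : 1 ≤ k) (w w' : ℕ → A)
    (hw : w ∈ EWinLang M) (hww' : KWinPerm k w' w) :
    w' ∈ EWinLang M := by
  obtain ⟨k₀, hk₀, v, hvw, hv⟩ := hw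
  have hvw' : KWinPerm (k₀ * k) v w' := by
    refine (hvw.mul_right k).trans ?_
    simpa only [mul_comm k k₀] using (hww'.mul_right k₀).symm
  exact ⟨k₀ * k, Nat.mul_pos hk₀ hk, v, hvw', hv⟩

/-- The `∃`-window jumping language of any Büchi automaton is `k⊞`-invariant
for every `k ≥ 1`. -/
theorem eWinLang_kWin_invariant (A : Type) [Fintype A] (M : BuchiAutomaton A)
    (k : ℕ) (hk : 1 ≤ k) (w w' : ℕ → A)
    (hw : w ∈ EWinLang M) (hww' : KWinPerm k w' w) :
    w' ∈ EWinLang M :=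
  eWinLang_kWin_invariant_general A M k hk w w' hw hww'
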